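/- Let k ≥ 1 and let L : ℤ^{2k} × ℤ^{2k} → ℤ be a ℤ-bilinear form such that L(e_i, e_i) is even for every i, and L(e_i, e_j) ≡ L(e_j, e_i) (mod 2) for all i ≠ j. Let G_L be the group with underlying set ℤ × ℤ^{2k} and multiplication (j₁, a)·(j₂, b) = (j₁ + j₂ + L(a,b), a + b). Then for every function c : {1,…,2k} → ℤ/2ℤ, the map F : G_L → ℤ/2ℤ defined by F(j, h) = j + Σ_{i=1}^{2k} c_i h_i + Σ_{1 ≤ i < i' ≤ 2k} h_i h_{i'} L(e_i, e_{i'}) (mod 2) is a group homomorphism. -/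

import Mathlib

/-- The multiplication of the group `G_L` on underlying set `ℤ × ℤ^{2k}`:
`(j₁, a)·(j₂, b) = (j₁ + j₂ + L(a,b), a + b)`. -/
def GLmul {k : ℕ} (L : (Fin (2 * k) → ℤ) →ₗ[ℤ] (Fin (2 * k) → ℤ) →ₗ[ℤ] ℤ)
    (p q : ℤ × (Fin (2 * k) → ℤ)) : ℤ × (Fin (2 * k) → ℤ) :=
  (p.1 + q.1 + L p.2 q.2, p.2 + q.2)

/-- The map `F(j, h) = j + Σᵢ cᵢ hᵢ + Σ_{i < i'} hᵢ hᵢ' L(eᵢ, eᵢ')  (mod 2)`. -/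
def Fmap {k : ℕ} (L : (Fin (2 * k) → ℤ) →ₗ[ℤ] (Fin (2 * k) → ℤ) →ₗ[ℤ] ℤ)
    (c : Fin (2 * k) → ZMod 2) (p : ℤ × (Fin (2 * k) → ℤ)) : ZMod 2 :=
  (p.1 : ZMod 2) + ∑ i : Fin (2 * k), c i * (p.2 i : ZMod 2) +
    ((∑ q ∈ Finset.univ.filter (fun q : Fin (2 * k) × Fin (2 * k) => q.1 < q.2),
        p.2 q.1 * p.2 q.2 * L (Pi.single q.1 1) (Pi.single q.2 1) : ℤ) : ZMod 2)

/-! Reduced mod 2, `L` is the bilinear form of the matrix `M = (L(eᵢ, eⱼ) mod 2)`, which is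
symmetric with zero diagonal, and the quadratic term of `F` is `h ⬝ᵥ U *ᵥ h` for the strictly
upper triangular part `U` of `M`. Since `U + Uᵀ = M`, the polarization of this quadratic form is
`L(a, b) mod 2`, so for `p = (j₁, a)` and `q = (j₂, b)` we get
`F(p·q) - F(p) - F(q) = 2 L(a, b) = 0`. -/

open Finset Matrix

namespace Matrix

variable {ι R : Type*}

def strictUpper [LinearOrder ι] [Zero R] (M : Matrix ι ι R) : Matrix ι ι R :=
  of fun i j => if i < j then M i j else 0

theorem strictUpper_add_transpose [LinearOrder ι] [AddZeroClass R] {M : Matrix ι ι R}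
    (hM : M.IsSymm) (hdiag : ∀ i, M i i = 0) : M.strictUpper + M.strictUpperᵀ = M := by
  ext i j
  rcases lt_trichotomy i j with h | rfl | h
  · simp [strictUpper, h, h.not_gt]
  · simp [strictUpper, hdiag]
  · simp [strictUpper, h, h.not_gt, hM.apply]

theorem dotProduct_strictUpper_mulVec [Fintype ι] [LinearOrder ι] [CommSemiring R]
    (M : Matrix ι ι R) (x : ι → R) :
    x ⬝ᵥ M.strictUpper *ᵥ x =
      ∑ q ∈ univ.filter (fun q : ι × ι => q.1 < q.2), x q.1 * x q.2 * M q.1 q.2 := by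
  simp only [dotProduct, mulVec, strictUpper, of_apply, Finset.mul_sum]
  rw [Finset.sum_filter, ← Finset.univ_product_univ, Finset.sum_product]
  refine Finset.sum_congr rfl fun i _ => Finset.sum_congr rfl fun j _ => ?_
  split_ifs <;> ring

theorem dotProduct_mulVec_add_add [Fintype ι] [CommSemiring R] (A : Matrix ι ι R) (a b : ι → R) :
    (a + b) ⬝ᵥ A *ᵥ (a + b) = a ⬝ᵥ A *ᵥ a + b ⬝ᵥ A *ᵥ b + a ⬝ᵥ (A + Aᵀ) *ᵥ b := by
  have hswap : b ⬝ᵥ A *ᵥ a = a ⬝ᵥ Aᵀ *ᵥ b := by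
    rw [dotProduct_mulVec, ← mulVec_transpose, dotProduct_comm]
  simp only [mulVec_add, add_mulVec, dotProduct_add, add_dotProduct, hswap]
  ring

end Matrix

theorem intCast_bilin_apply_eq_dotProduct {ι R : Type*} [Fintype ι] [DecidableEq ι] [Ring R]
    (L : (ι → ℤ) →ₗ[ℤ] (ι → ℤ) →ₗ[ℤ] ℤ) (a b : ι → ℤ) :
    ((L a b : ℤ) : R) =
      (fun i => (a i : R)) ⬝ᵥ (LinearMap.toMatrix₂' ℤ L).map Int.cast *ᵥ fun i => (b i : R) := by
  conv_lhs => rw [← Matrix.toLinearMap₂'_toMatrix' (R := ℤ) L, Matrix.toLinearMap₂'_apply']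
  simp only [dotProduct, mulVec, map_apply]
  push_cast
  rfl

theorem Fmap_eq_dotProduct {k : ℕ} (L : (Fin (2 * k) → ℤ) →ₗ[ℤ] (Fin (2 * k) → ℤ) →ₗ[ℤ] ℤ)
    (c : Fin (2 * k) → ZMod 2) (p : ℤ × (Fin (2 * k) → ℤ)) :
    Fmap L c p = (p.1 : ZMod 2) + c ⬝ᵥ (fun i => (p.2 i : ZMod 2)) +
      (fun i => (p.2 i : ZMod 2)) ⬝ᵥ
        ((LinearMap.toMatrix₂' ℤ L).map Int.cast).strictUpper *ᵥ fun i => (p.2 i : ZMod 2) := by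
  rw [dotProduct_strictUpper_mulVec, Fmap]
  push_cast
  rfl

theorem fmap_isGroupHom_general (k : ℕ)
    (L : (Fin (2 * k) → ℤ) →ₗ[ℤ] (Fin (2 * k) → ℤ) →ₗ[ℤ] ℤ)
    (hdiag : ∀ i : Fin (2 * k), Even (L (Pi.single i 1) (Pi.single i 1)))
    (hsym : ∀ i j : Fin (2 * k), i ≠ j →
      ((L (Pi.single i 1) (Pi.single j 1) : ℤ) : ZMod 2)
        = ((L (Pi.single j 1) (Pi.single i 1) : ℤ) : ZMod 2))
    (c : Fin (2 * k) → ZMod 2) :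
    ∀ p q : ℤ × (Fin (2 * k) → ℤ),
      Fmap L c (GLmul L p q) = Fmap L c p + Fmap L c q := by
  rintro ⟨j₁, a⟩ ⟨j₂, b⟩
  set M : Matrix (Fin (2 * k)) (Fin (2 * k)) (ZMod 2) := (LinearMap.toMatrix₂' ℤ L).map Int.cast
  have hM : M.IsSymm := IsSymm.ext fun i j => by
    rcases eq_or_ne i j with rfl | hij
    · rfl
    · exact hsym j i hij.symm
  have hMdiag : ∀ i, M i i = 0 := fun i => ZMod.intCast_eq_zero_iff_even.mpr (hdiag i)
  set a' : Fin (2 * k) → ZMod 2 := fun i => (a i : ZMod 2)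
  set b' : Fin (2 * k) → ZMod 2 := fun i => (b i : ZMod 2)
  have hab : (fun i => ((a + b) i : ZMod 2)) = a' + b' := by ext; simp [a', b']
  simp only [Fmap_eq_dotProduct, GLmul, Int.cast_add, intCast_bilin_apply_eq_dotProduct, hab]
  rw [dotProduct_mulVec_add_add, strictUpper_add_transpose hM hMdiag, dotProduct_add]
  linear_combination CharTwo.add_self_eq_zero (a' ⬝ᵥ M *ᵥ b')

/-- If `L` is a ℤ-bilinear form on `ℤ^{2k}` with `L(eᵢ,eᵢ)` even and
`L(eᵢ,eⱼ) ≡ L(eⱼ,eᵢ) (mod 2)` for `i ≠ j`, then for any `c : {1,…,2k} → ℤ/2`, the map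
`F(j,h) = j + Σ cᵢ hᵢ + Σ_{i<i'} hᵢ hᵢ' L(eᵢ,eᵢ') (mod 2)` is a group homomorphism from
`G_L` to `ℤ/2`. -/
theorem fmap_isGroupHom (k : ℕ) (hk : 1 ≤ k)
    (L : (Fin (2 * k) → ℤ) →ₗ[ℤ] (Fin (2 * k) → ℤ) →ₗ[ℤ] ℤ)
    (hdiag : ∀ i : Fin (2 * k), Even (L (Pi.single i 1) (Pi.single i 1)))
    (hsym : ∀ i j : Fin (2 * k), i ≠ j →
      ((L (Pi.single i 1) (Pi.single j 1) : ℤ) : ZMod 2)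
        = ((L (Pi.single j 1) (Pi.single i 1) : ℤ) : ZMod 2))
    (c : Fin (2 * k) → ZMod 2) :
    ∀ p q : ℤ × (Fin (2 * k) → ℤ),
      Fmap L c (GLmul L p q) = Fmap L c p + Fmap L c q :=
  fmap_isGroupHom_general k L hdiag hsym c
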